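/- arXiv:1301.3916 — 2 statements merged into one kernel-verified Lean document; each statement's English description precedes it below -/
import Mathlib

section
/- Under the hypotheses of the renewal relation (p_n, q_n ∈ [0,1], p_0 = 0, q_0 = 1, q_n = Σ_{k=0}^n p_k q_{n-k}), the sum p = Σ_{n≥0} p_n equals 1 if and only if lim_{z→1⁻} Σ_{n≥0} q_n z^n = +∞. -/
open Filter
open Topology

theorem recurrence_iff_divergence (p q : ℕ → ℝ)
    (hp : ∀ n, p n ∈ Set.Icc (0:ℝ) 1) (hq : ∀ n, q n ∈ Set.Icc (0:ℝ) 1)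
    (hp0 : p 0 = 0) (hq0 : q 0 = 1)
    (hconv : ∀ n, 1 ≤ n → q n = ∑ k ∈ Finset.range (n+1), p k * q (n - k)) :
    (∑' n, p n) = 1 ↔
      Tendsto (fun z : ℝ => ∑' n, q n * z ^ n)
        (nhdsWithin 1 (Set.Ico (0:ℝ) 1)) atTop := by
  set F := nhdsWithin (1:ℝ) (Set.Ico (0:ℝ) 1) with hF
  set P : ℝ → ℝ := fun z => ∑' n, p n * z ^ n with hPdef
  set Q : ℝ → ℝ := fun z => ∑' n, q n * z ^ n with hQdef
  -- summability of the power series on [0,1)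
  have hsum : ∀ (f : ℕ → ℝ), (∀ n, f n ∈ Set.Icc (0:ℝ) 1) → ∀ z ∈ Set.Ico (0:ℝ) 1,
      Summable (fun n => f n * z ^ n) := by
    intro f hf z hz
    refine Summable.of_nonneg_of_le (fun n => mul_nonneg (hf n).1 (pow_nonneg hz.1 n))
      (fun n => ?_) (summable_geometric_of_lt_one hz.1 hz.2)
    calc f n * z ^ n ≤ 1 * z ^ n := mul_le_mul_of_nonneg_right (hf n).2 (pow_nonneg hz.1 n)
      _ = z ^ n := one_mul _
  -- the key renewal identity
  have key : ∀ z ∈ Set.Ico (0:ℝ) 1, Q z = 1 + P z * Q z := by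
    intro z hz
    have hps := hsum p hp z hz
    have hqs := hsum q hq z hz
    have hnorm : ∀ (f : ℕ → ℝ), (∀ n, f n ∈ Set.Icc (0:ℝ) 1) →
        Summable fun n => ‖f n * z ^ n‖ := by
      intro f hf
      refine (hsum f hf z hz).congr fun n => ?_
      rw [Real.norm_eq_abs, abs_of_nonneg (mul_nonneg (hf n).1 (pow_nonneg hz.1 n))]
    have hcauchy := tsum_mul_tsum_eq_tsum_sum_range_of_summable_norm
      (hnorm p hp) (hnorm q hq)
    have h1 : P z * Q z = ∑' n, (if n = 0 then 0 else q n * z ^ n) := by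
      rw [hPdef, hQdef]
      simp only
      rw [hcauchy]
      congr 1
      funext n
      have hinner : ∑ k ∈ Finset.range (n+1), (p k * z ^ k) * (q (n - k) * z ^ (n - k)) =
          (∑ k ∈ Finset.range (n+1), p k * q (n - k)) * z ^ n := by
        rw [Finset.sum_mul]
        refine Finset.sum_congr rfl fun k hk => ?_
        have hkn : k ≤ n := Nat.lt_succ_iff.mp (Finset.mem_range.mp hk)
        have : z ^ k * z ^ (n - k) = z ^ n := by
          rw [← pow_add, Nat.add_sub_cancel' hkn]
        ring_nf
        rw [← this]
        ring
      rw [hinner]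
      rcases Nat.eq_zero_or_pos n with h0 | h1
      · subst h0; simp [hp0]
      · rw [if_neg (Nat.pos_iff_ne_zero.mp h1), ← hconv n h1]
    have hg : Summable (fun n => (if n = 0 then 0 else q n * z ^ n)) := by
      apply hqs.of_nonneg_of_le
      · intro n
        split <;> [rfl; exact mul_nonneg (hq n).1 (pow_nonneg hz.1 n)]
      · intro n
        split
        · exact mul_nonneg (hq n).1 (pow_nonneg hz.1 n)
        · rfl
    have h2 : Q z - P z * Q z = 1 := by
      rw [h1, hQdef]
      simp only
      rw [← Summable.tsum_sub hqs hg]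
      have : ∀ n, q n * z ^ n - (if n = 0 then 0 else q n * z ^ n) =
          (if n = 0 then (1:ℝ) else 0) := by
        intro n
        rcases Nat.eq_zero_or_pos n with h0 | h1
        · subst h0; simp [hq0]
        · simp [Nat.pos_iff_ne_zero.mp h1]
      rw [tsum_congr this, tsum_eq_single 0 (by intro b hb; simp [hb])]
      simp
    linarith
  -- positivity facts
  have hQpos : ∀ z ∈ Set.Ico (0:ℝ) 1, 1 ≤ Q z := by
    intro z hz
    have hqs := hsum q hq z hz
    have := Summable.le_tsum hqs 0 (fun n _ => mul_nonneg (hq n).1 (pow_nonneg hz.1 n))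
    simpa [hq0] using this
  have hPlt1 : ∀ z ∈ Set.Ico (0:ℝ) 1, 0 < 1 - P z := by
    intro z hz
    have hk := key z hz
    have hQ1 := hQpos z hz
    have hmul : Q z * (1 - P z) = 1 := by ring_nf; linarith [hk]
    nlinarith
  have hQeq : ∀ z ∈ Set.Ico (0:ℝ) 1, Q z = (1 - P z)⁻¹ := by
    intro z hz
    have hk := key z hz
    have hne : (1 - P z) ≠ 0 := ne_of_gt (hPlt1 z hz)
    field_simp
    linarith
  have hPle1 : ∀ z ∈ Set.Ico (0:ℝ) 1, P z ≤ 1 := fun z hz => by linarith [hPlt1 z hz]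
  -- F is nontrivial
  have hFneBot : F.NeBot := by
    rw [hF, ← mem_closure_iff_nhdsWithin_neBot, closure_Ico (by norm_num : (0:ℝ) ≠ 1)]
    exact Set.mem_Icc.mpr ⟨by norm_num, le_refl 1⟩
  -- polynomial partial sums converge along F
  have hpoly : ∀ N : ℕ, Tendsto (fun z : ℝ => ∑ k ∈ Finset.range N, p k * z ^ k) F
      (𝓝 (∑ k ∈ Finset.range N, p k)) := by
    intro N
    have hc : Continuous (fun z : ℝ => ∑ k ∈ Finset.range N, p k * z ^ k) :=
      continuous_finset_sum _ fun k _ => continuous_const.mul (continuous_pow k)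
    have := hc.continuousAt (x := (1:ℝ))
    have h1 : (∑ k ∈ Finset.range N, p k * (1:ℝ) ^ k) = ∑ k ∈ Finset.range N, p k := by
      simp
    rw [ContinuousAt, h1] at this
    exact this.mono_left nhdsWithin_le_nhds
  -- partial sums of p are ≤ 1
  have hpartial : ∀ N : ℕ, ∑ k ∈ Finset.range N, p k ≤ 1 := by
    intro N
    refine le_of_tendsto (hpoly N) ?_
    filter_upwards [self_mem_nhdsWithin] with z hz
    have hps := hsum p hp z hz
    have hle : ∑ k ∈ Finset.range N, p k * z ^ k ≤ P z :=
      Summable.sum_le_tsum _ (fun n _ => mul_nonneg (hp n).1 (pow_nonneg hz.1 n)) hps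
    linarith [hPle1 z hz]
  have hpsum : Summable p :=
    summable_of_sum_range_le (fun n => (hp n).1) hpartial
  have htsum_le : (∑' n, p n) ≤ 1 := Real.tsum_le_of_sum_range_le (fun n => (hp n).1) hpartial
  constructor
  · -- forward direction
    intro hs1
    have hPtendsto : Tendsto P F (𝓝 1) := by
      rw [tendsto_order]
      constructor
      · intro a ha
        have hhs : HasSum p 1 := hs1 ▸ hpsum.hasSum
        have := hhs.tendsto_sum_nat
        have hN : ∃ N, a < ∑ k ∈ Finset.range N, p k := by
          by_contra hcon
          push_neg at hcon
          have := le_of_tendsto this (Filter.Eventually.of_forall hcon)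
          linarith
        obtain ⟨N, hN⟩ := hN
        have := (hpoly N).eventually (eventually_gt_nhds hN)
        filter_upwards [this, self_mem_nhdsWithin] with z hz1 hz2
        have hps := hsum p hp z hz2
        have hle : ∑ k ∈ Finset.range N, p k * z ^ k ≤ P z :=
          Summable.sum_le_tsum _ (fun n _ => mul_nonneg (hp n).1 (pow_nonneg hz2.1 n)) hps
        linarith
      · intro a ha
        filter_upwards [self_mem_nhdsWithin] with z hz
        linarith [hPle1 z hz, hPlt1 z hz]
    have htend0 : Tendsto (fun z => 1 - P z) F (𝓝[>] 0) := by
      rw [tendsto_nhdsWithin_iff]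
      constructor
      · have := tendsto_const_nhds (x := (1:ℝ)) (f := F) |>.sub hPtendsto
        simpa using this
      · filter_upwards [self_mem_nhdsWithin] with z hz
        exact hPlt1 z hz
    have := tendsto_inv_nhdsGT_zero.comp htend0
    refine this.congr' ?_
    filter_upwards [self_mem_nhdsWithin] with z hz
    exact (hQeq z hz).symm
  · -- backward direction (contrapositive)
    intro hdiv
    by_contra hne
    have hs_lt : (∑' n, p n) < 1 := lt_of_le_of_ne htsum_le hne
    set s := ∑' n, p n with hsdef
    have hPles : ∀ z ∈ Set.Ico (0:ℝ) 1, P z ≤ s := by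
      intro z hz
      refine Summable.tsum_le_tsum (fun n => ?_) (hsum p hp z hz) hpsum
      calc p n * z ^ n ≤ p n * 1 ^ n := by
            apply mul_le_mul_of_nonneg_left _ (hp n).1
            exact pow_le_pow_left₀ hz.1 (le_of_lt hz.2) n
        _ = p n := by simp
    have hQbound : ∀ z ∈ Set.Ico (0:ℝ) 1, Q z ≤ (1 - s)⁻¹ := by
      intro z hz
      rw [hQeq z hz]
      apply inv_anti₀ (by linarith)
      linarith [hPles z hz]
    have hev := hdiv.eventually_gt_atTop ((1 - s)⁻¹)
    have : ∀ᶠ z in F, False := by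
      filter_upwards [hev, self_mem_nhdsWithin] with z hz1 hz2
      linarith [hQbound z hz2]
    obtain ⟨z, hz⟩ := this.exists
    exact hz
end

section
/- For fixed z > 0, ∫_0^π e^{t z cos θ} dθ ∼ e^{tz} √(π/(2tz)) as t → ∞ (Laplace's method at the endpoint maximum θ = 0). -/
/-! Write `exp (x cos θ) = exp x * exp (-x (1 - cos θ))` with `x = r ^ 2`. The substitution
`θ = v / r` turns `r * ∫₀^π exp (-r² (1 - cos θ)) dθ` into
`∫₀^{π r} exp (-r² (1 - cos (v / r))) dv`. The integrand tends to `exp (-v² / 2)` and, by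
Jordan's inequality `1 - cos x ≥ 2 x² / π²` on `[-π, π]`, is dominated by `exp (-2 v² / π²)`;
dominated convergence gives the half-line Gaussian integral `√(π / 2)`. -/

open Filter MeasureTheory Set Real Topology

theorem smul_intervalIntegral_eq_integral_Ioi_indicator_comp_div {E : Type*}
    [NormedAddCommGroup E] [NormedSpace ℝ E] (f : ℝ → E) {r a : ℝ} (hr : 0 < r) (ha : 0 ≤ a) :
    r • ∫ θ in (0 : ℝ)..a, f θ
      = ∫ v in Ioi 0, (Ioc 0 (r * a)).indicator (fun v => f (v / r)) v := by
  rw [setIntegral_indicator measurableSet_Ioc, inter_eq_right.mpr Ioc_subset_Ioi_self,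
    ← intervalIntegral.integral_of_le (by positivity), intervalIntegral.integral_comp_div _ hr.ne',
    zero_div, mul_div_cancel_left₀ _ hr.ne']

theorem Real.two_div_pi_sq_mul_sq_le_sq_mul_one_sub_cos_div {r v : ℝ} (hr : 0 < r)
    (hv : |v| ≤ π * r) : 2 / π ^ 2 * v ^ 2 ≤ r ^ 2 * (1 - cos (v / r)) := by
  have hvr : |v / r| ≤ π := by rwa [abs_div, abs_of_pos hr, div_le_iff₀ hr]
  have := cos_le_one_sub_mul_cos_sq hvr
  calc 2 / π ^ 2 * v ^ 2 = r ^ 2 * (2 / π ^ 2 * (v / r) ^ 2) := by field_simp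
    _ ≤ r ^ 2 * (1 - cos (v / r)) := by gcongr; linarith

theorem Real.tendsto_sq_mul_one_sub_cos_div (v : ℝ) :
    Tendsto (fun r : ℝ => r ^ 2 * (1 - cos (v / r))) atTop (𝓝 (v ^ 2 / 2)) := by
  have hbound : ∀ᶠ r in atTop,
      ‖r ^ 2 * (1 - cos (v / r)) - v ^ 2 / 2‖ ≤ 5 / 96 * v ^ 4 * (r ^ 2)⁻¹ := by
    filter_upwards [eventually_ge_atTop (|v| + 1)] with r hr
    have hr0 : 0 < r := by linarith [abs_nonneg v]
    have hvr : |v / r| ≤ 1 := by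
      rw [abs_div, abs_of_pos hr0, div_le_one hr0]; linarith
    have hsplit : r ^ 2 * (1 - cos (v / r)) - v ^ 2 / 2
        = -(r ^ 2 * (cos (v / r) - (1 - (v / r) ^ 2 / 2))) := by
      field_simp; ring
    calc ‖r ^ 2 * (1 - cos (v / r)) - v ^ 2 / 2‖
        = r ^ 2 * |cos (v / r) - (1 - (v / r) ^ 2 / 2)| := by
          rw [hsplit, norm_neg, Real.norm_eq_abs, abs_mul, abs_of_pos (by positivity)]
      _ ≤ r ^ 2 * (|v / r| ^ 4 * (5 / 96)) := by gcongr; exact cos_bound hvr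
      _ = 5 / 96 * v ^ 4 * (r ^ 2)⁻¹ := by
          rw [pow_abs, abs_of_nonneg (by positivity)]; field_simp
  have hdecay : Tendsto (fun r : ℝ => 5 / 96 * v ^ 4 * (r ^ 2)⁻¹) atTop (𝓝 0) := by
    have h := (tendsto_inv_atTop_zero.comp (tendsto_pow_atTop two_ne_zero)).const_mul
      (5 / 96 * v ^ 4)
    rwa [mul_zero] at h
  rw [tendsto_iff_norm_sub_tendsto_zero]
  exact squeeze_zero' (Eventually.of_forall fun _ => norm_nonneg _) hbound hdecay

theorem Real.integral_exp_neg_sq_div_two_Ioi :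
    ∫ v in Ioi (0 : ℝ), exp (-(v ^ 2 / 2)) = √(π / 2) := by
  have h := integral_gaussian_Ioi (1 / 2)
  rw [show π / (1 / 2) = 2 ^ 2 * (π / 2) by ring, sqrt_mul' _ (by positivity),
    sqrt_sq zero_le_two] at h
  simpa [neg_div, div_eq_inv_mul] using h

theorem Real.tendsto_mul_integral_exp_neg_sq_mul_one_sub_cos {a : ℝ} (ha : 0 < a) (haπ : a ≤ π) :
    Tendsto (fun r : ℝ => r * ∫ θ in (0 : ℝ)..a, exp (-(r ^ 2 * (1 - cos θ)))) atTop
      (𝓝 √(π / 2)) := by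
  have hsubst : ∀ᶠ r in atTop,
      ∫ v in Ioi 0, (Ioc 0 (r * a)).indicator (fun v => exp (-(r ^ 2 * (1 - cos (v / r))))) v
        = r * ∫ θ in (0 : ℝ)..a, exp (-(r ^ 2 * (1 - cos θ))) := by
    filter_upwards [eventually_gt_atTop 0] with r hr
    rw [← smul_eq_mul]
    exact (smul_intervalIntegral_eq_integral_Ioi_indicator_comp_div
      (fun θ => exp (-(r ^ 2 * (1 - cos θ)))) hr ha.le).symm
  rw [← integral_exp_neg_sq_div_two_Ioi]
  refine Tendsto.congr' hsubst <| tendsto_integral_filter_of_dominated_convergence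
    (fun v => exp (-(2 / π ^ 2) * v ^ 2)) ?_ ?_ ?_ ?_
  · exact Eventually.of_forall fun r =>
      (Measurable.indicator (by fun_prop) measurableSet_Ioc).aestronglyMeasurable
  · filter_upwards [eventually_gt_atTop 0] with r hr
    refine Eventually.of_forall fun v => ?_
    by_cases hv : v ∈ Ioc 0 (r * a)
    · have hvπ : |v| ≤ π * r := by
        rw [abs_of_pos hv.1]; nlinarith [hv.2]
      rw [indicator_of_mem hv, norm_of_nonneg (exp_pos _).le, exp_le_exp, neg_mul, neg_le_neg_iff]
      exact two_div_pi_sq_mul_sq_le_sq_mul_one_sub_cos_div hr hvπ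
    · rw [indicator_of_notMem hv, norm_zero]
      positivity
  · exact (integrable_exp_neg_mul_sq (by positivity)).integrableOn
  · refine ae_restrict_of_forall_mem measurableSet_Ioi fun v (hv : 0 < v) => ?_
    have hmem : ∀ᶠ r in atTop, v ∈ Ioc 0 (r * a) := by
      filter_upwards [eventually_ge_atTop (v / a)] with r hr
      exact ⟨hv, (div_le_iff₀ ha).mp hr⟩
    refine Tendsto.congr' ?_ ((tendsto_sq_mul_one_sub_cos_div v).neg.rexp)
    filter_upwards [hmem] with r hr
    rw [indicator_of_mem hr]

theorem laplace_method_bessel (z : ℝ) (hz : 0 < z) :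
    Tendsto
      (fun t : ℝ => (∫ θ in (0:ℝ)..Real.pi, Real.exp (t * z * Real.cos θ))
        / (Real.exp (t * z) * Real.sqrt (Real.pi / (2 * t * z)))) atTop (nhds 1) := by
  have hlim := ((tendsto_mul_integral_exp_neg_sq_mul_one_sub_cos pi_pos le_rfl).comp
    (tendsto_sqrt_atTop.comp (tendsto_id.atTop_mul_const hz))).div_const √(π / 2)
  rw [div_self (by positivity)] at hlim
  refine hlim.congr' ?_
  filter_upwards [eventually_gt_atTop 0] with t ht
  have hsq : √(t * z) ^ 2 = t * z := sq_sqrt (by positivity)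
  have hfactor : ∀ θ, exp (t * z * cos θ) = exp (t * z) * exp (-(√(t * z) ^ 2 * (1 - cos θ))) :=
    fun θ => by rw [hsq, ← exp_add]; ring_nf
  simp only [Function.comp_apply, id, hfactor, intervalIntegral.integral_const_mul]
  have hden : √(π / (2 * t * z)) = √(π / 2) / √(t * z) := by
    rw [← sqrt_div' _ (by positivity)]; ring_nf
  rw [hden]
  field_simp
end
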